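/- arXiv:2410.22001 — 2 statements merged into one kernel-verified Lean document; each statement's English description precedes it below -/
import Mathlib

section
/- Let p be a stochastic choice function on a menu M and its two-element subsets, and suppose there exists a positive sign-consistent cycle with respect to p(·|M) on some subset M' ⊆ M. Then there exists an MSC model on M that rationalizes p and is not reversible on M with respect to p, i.e. p(k|M)·q_kl(M) ≠ p(l|M)·q_lk(M) for some k,l ∈ M. -/
open Finset

variable {X : Type*} [DecidableEq X]

/-- The menus relevant to an MSC model on `M`: `M` itself and the two-element subsets of `M`. -/
def RelMenu (M N : Finset X) : Prop := N = M ∨ (N ⊆ M ∧ N.card = 2)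

/-- `Q` is row-stochastic on `N`: nonnegative entries, rows summing to 1. -/
def RowStochOn (N : Finset X) (Q : X → X → ℝ) : Prop :=
  (∀ i ∈ N, ∀ j ∈ N, 0 ≤ Q i j) ∧ ∀ i ∈ N, ∑ j ∈ N, Q i j = 1

/-- The axioms of an MSC model on the menu `M`: row-stochasticity on relevant menus,
(A1) prolonged consideration, (A2) pairwise comparability on binary sets, (A3) TR-IIA. -/
def IsMSC (M : Finset X) (q : Finset X → X → X → ℝ) : Prop :=
  (∀ N, RelMenu M N → RowStochOn N (q N)) ∧
  (∀ N, RelMenu M N → ∀ i ∈ N, 0 < q N i i) ∧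
  (∀ i ∈ M, ∀ j ∈ M, i ≠ j → q {i, j} i j = 0 → 0 < q {i, j} j i) ∧
  (∀ N, RelMenu M N → ∀ i ∈ N, ∀ j ∈ N, i ≠ j →
    q {i, j} i j * q N j i = q {i, j} j i * q N i j)

/-- `p` is a stochastic choice function. -/
def IsSCF (p : Finset X → X → ℝ) : Prop :=
  ∀ N : Finset X, N.Nonempty →
    (∀ i, 0 ≤ p N i) ∧ (∀ i, i ∉ N → p N i = 0) ∧ ∑ i ∈ N, p N i = 1

/-- `σ` is a stationary (row) vector of `Q` on `N`, i.e. `σ (I - Q) = 0` on `N`. -/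
def StationaryOn (N : Finset X) (Q : X → X → ℝ) (σ : X → ℝ) : Prop :=
  ∀ j ∈ N, ∑ i ∈ N, σ i * Q i j = σ j

/-- The MSC model `q` rationalizes `p` on the menu `M`. -/
def Rationalizes (M : Finset X) (q : Finset X → X → X → ℝ) (p : Finset X → X → ℝ) : Prop :=
  IsMSC M q ∧ ∀ N, RelMenu M N → StationaryOn N (q N) (p N)

/-- The weighted difference in choice probabilities `δ_ij(M)`. -/
def delta (p : Finset X → X → ℝ) (M : Finset X) (i j : X) : ℝ :=
  p M i * p {i, j} j - p {i, j} i * p M j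

/-- The set of ordered pairs of consecutive elements (with wrap-around) of a list. -/
def cyclePairs (c : List X) : List (X × X) := c.zip (c.rotate 1)

/-- `c` is a cycle of distinct alternatives lying in (a subset of) `M`. -/
def IsCycleIn (M : Finset X) (c : List X) : Prop :=
  c.Nodup ∧ 2 ≤ c.length ∧ ∀ x ∈ c, x ∈ M

/-- All pairs of the cycle have strictly positive `δ`. -/
def PosConsistent (p : Finset X → X → ℝ) (M : Finset X) (c : List X) : Prop :=
  ∀ pr ∈ cyclePairs c, 0 < delta p M pr.1 pr.2

/-- All pairs of the cycle have strictly negative `δ`. -/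
def NegConsistent (p : Finset X → X → ℝ) (M : Finset X) (c : List X) : Prop :=
  ∀ pr ∈ cyclePairs c, delta p M pr.1 pr.2 < 0

/-- `p(·|M)` is bounded in a cycle over the pair `(i, j)`. -/
def BoundedInCycle (p : Finset X → X → ℝ) (M : Finset X) (i j : X) : Prop :=
  delta p M i j = 0 ∨
    ∃ c : List X, IsCycleIn M c ∧ (i, j) ∈ cyclePairs c ∧
      (PosConsistent p M c ∨ NegConsistent p M c)

/-!
On every menu other than `M` take `Q = (I + 𝟙 p)/2`, which has `p` as stationary distribution.
On `M` take `Q = I + ε (R - diag (R 𝟙))` for the rates `r k l = p(l|{k,l}) / |δ_kl(M)|` when `k, l`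
are adjacent on the cycle, and `r k l = 0` otherwise. TR-IIA holds because `p(l|{k,l}) r l k` is
symmetric in `k, l`. The net flow `p(k|M) r k l - p(l|M) r l k = δ_kl(M) / |δ_kl(M)|` is `1` along
every edge of the positive cycle, so it is balanced at every vertex, which makes `p(·|M)`
stationary, but it does not vanish, so the chain is not reversible.
-/

theorem mem_of_mem_cyclePairs {α : Type*} {c : List α} {k l : α} (h : (k, l) ∈ cyclePairs c) :
    k ∈ c ∧ l ∈ c :=
  (List.of_mem_zip h).imp_right List.mem_rotate.1

section Cycles

variable {c : List X}

theorem cyclePairs_eq_map_formPerm (hc : c.Nodup) :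
    cyclePairs c = c.map fun x => (x, c.formPerm x) := by
  have hrot : c.rotate 1 = c.map c.formPerm :=
    List.ext_getElem (by simp) fun n h _ => by
      rw [List.getElem_rotate, List.getElem_map, List.formPerm_apply_getElem _ hc]
  simpa [cyclePairs, hrot] using List.zip_map' (f := id) (g := c.formPerm) (l := c)

theorem mem_cyclePairs_iff (hc : c.Nodup) {i j : X} :
    (i, j) ∈ cyclePairs c ↔ i ∈ c ∧ c.formPerm i = j := by
  simp [cyclePairs_eq_map_formPerm hc]

theorem sum_indicator_mem_cyclePairs_left {M : Finset X} (hc : c.Nodup) (hcM : ∀ x ∈ c, x ∈ M)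
    (j : X) :
    ∑ i ∈ M, (if (i, j) ∈ cyclePairs c then (1 : ℝ) else 0) = if j ∈ c then 1 else 0 := by
  have hpred : ∀ i, (i, j) ∈ cyclePairs c ↔ j ∈ c ∧ c.formPerm.symm j = i := by
    intro i
    rw [mem_cyclePairs_iff hc, Equiv.symm_apply_eq]
    constructor
    · rintro ⟨hi, rfl⟩
      exact ⟨List.formPerm_apply_mem_of_mem hi, rfl⟩
    · rintro ⟨hj, rfl⟩
      exact ⟨List.formPerm_mem_iff_mem.1 hj, rfl⟩
  by_cases hj : j ∈ c
  · simp [hpred, hj, hcM _ (mem_of_mem_cyclePairs ((hpred _).2 ⟨hj, rfl⟩)).1]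
  · simp [hpred, hj]

theorem sum_indicator_mem_cyclePairs_right {M : Finset X} (hc : c.Nodup) (hcM : ∀ x ∈ c, x ∈ M)
    (j : X) :
    ∑ k ∈ M, (if (j, k) ∈ cyclePairs c then (1 : ℝ) else 0) = if j ∈ c then 1 else 0 := by
  by_cases hj : j ∈ c
  · simp [mem_cyclePairs_iff hc, hj, hcM _ (List.formPerm_apply_mem_of_mem hj)]
  · simp [mem_cyclePairs_iff hc, hj]

theorem exists_mem_cyclePairs (hc : c.Nodup) (hne : c ≠ []) : ∃ k l, (k, l) ∈ cyclePairs c := by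
  obtain ⟨x, hx⟩ := List.exists_mem_of_ne_nil c hne
  exact ⟨x, c.formPerm x, (mem_cyclePairs_iff hc).2 ⟨hx, rfl⟩⟩

end Cycles

theorem delta_swap (p : Finset X → X → ℝ) (M : Finset X) (i j : X) :
    delta p M j i = -delta p M i j := by
  rw [delta, delta, Finset.pair_comm]
  ring

theorem delta_self (p : Finset X → X → ℝ) (M : Finset X) (i : X) : delta p M i i = 0 := by
  rw [delta]
  ring

namespace PosConsistent

variable {p : Finset X → X → ℝ} {M : Finset X} {c : List X}

theorem ne (hpos : PosConsistent p M c) {i j : X} (h : (i, j) ∈ cyclePairs c) : i ≠ j := by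
  rintro rfl
  exact (hpos _ h).ne' (delta_self p M i)

theorem swap_notMem (hpos : PosConsistent p M c) {i j : X} (h : (i, j) ∈ cyclePairs c) :
    (j, i) ∉ cyclePairs c := fun h' => by
  have := hpos _ h'
  rw [delta_swap] at this
  linarith [hpos _ h]

theorem three_le_length (hpos : PosConsistent p M c) (hlen : 2 ≤ c.length) : 3 ≤ c.length := by
  by_contra hlt
  obtain ⟨a, b, rfl⟩ := List.length_eq_two.1 (show c.length = 2 by omega)
  exact hpos.swap_notMem (i := a) (j := b) (by simp [cyclePairs]) (by simp [cyclePairs])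

end PosConsistent

section Uniformization

variable (N : Finset X) (ε : ℝ) (r : X → X → ℝ)

def uniformization (k l : X) : ℝ :=
  (if k = l then 1 else 0) + ε * (r k l - if k = l then ∑ j ∈ N, r k j else 0)

variable {N ε r}

theorem uniformization_of_ne {k l : X} (h : k ≠ l) : uniformization N ε r k l = ε * r k l := by
  simp [uniformization, h]

theorem uniformization_self_pos (hε : 0 ≤ ε) {k : X} (hr : 0 ≤ r k k)
    (hrow : ε * ∑ j ∈ N, r k j < 1) : 0 < uniformization N ε r k k := by
  simp only [uniformization, if_true]
  linarith [mul_nonneg hε hr]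

theorem rowStochOn_uniformization (hε : 0 ≤ ε) (hr : ∀ k l, 0 ≤ r k l)
    (hrow : ∀ k ∈ N, ε * ∑ l ∈ N, r k l < 1) : RowStochOn N (uniformization N ε r) := by
  refine ⟨fun k hk l _ => ?_, fun k hk => ?_⟩
  · rcases eq_or_ne k l with rfl | hkl
    · exact (uniformization_self_pos hε (hr k k) (hrow k hk)).le
    · rw [uniformization_of_ne hkl]
      exact mul_nonneg hε (hr k l)
  · simp [uniformization, Finset.sum_add_distrib, ← Finset.mul_sum, Finset.sum_sub_distrib, hk]

theorem stationaryOn_uniformization (σ : X → ℝ)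
    (hbal : ∀ j ∈ N, ∑ i ∈ N, σ i * r i j = σ j * ∑ l ∈ N, r j l) :
    StationaryOn N (uniformization N ε r) σ := by
  intro j hj
  have hexp : ∀ i, σ i * uniformization N ε r i j
      = (if i = j then σ j else 0) +
          ε * (σ i * r i j - if i = j then σ j * ∑ l ∈ N, r j l else 0) := by
    intro i
    rcases eq_or_ne i j with rfl | hij
    · simp only [uniformization, if_true]
      ring
    · simp only [uniformization, if_neg hij]
      ring
  simp [hexp, Finset.sum_add_distrib, ← Finset.mul_sum, Finset.sum_sub_distrib, hj, hbal j hj]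

theorem exists_pos_mul_sum_lt_one {ι : Type*} (N : Finset ι) (r : ι → ι → ℝ)
    (hr : ∀ k l, 0 ≤ r k l) : ∃ ε > 0, ∀ k ∈ N, ε * ∑ l ∈ N, r k l < 1 := by
  set total := ∑ k ∈ N, ∑ l ∈ N, r k l
  have htotal : 0 ≤ total := Finset.sum_nonneg fun k _ => Finset.sum_nonneg fun l _ => hr k l
  refine ⟨(total + 1)⁻¹, by positivity, fun k hk => ?_⟩
  have hrow : ∑ l ∈ N, r k l ≤ total :=
    Finset.single_le_sum (f := fun k => ∑ l ∈ N, r k l)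
      (fun k _ => Finset.sum_nonneg fun l _ => hr k l) hk
  rw [inv_mul_lt_one₀ (by positivity)]
  linarith

end Uniformization

section Resampling

noncomputable def resampling (σ : X → ℝ) (k l : X) : ℝ := ((if k = l then 1 else 0) + σ l) / 2

variable {N : Finset X} {σ : X → ℝ}

theorem resampling_of_ne {k l : X} (h : k ≠ l) : resampling σ k l = σ l / 2 := by
  simp [resampling, h]

theorem resampling_self_pos (hσ : ∀ i, 0 ≤ σ i) (k : X) : 0 < resampling σ k k := by
  simp only [resampling, if_true]
  linarith [hσ k]

theorem rowStochOn_resampling (hσ : ∀ i, 0 ≤ σ i) (hsum : ∑ i ∈ N, σ i = 1) :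
    RowStochOn N (resampling σ) := by
  refine ⟨fun k _ l _ => ?_, fun k hk => ?_⟩
  · unfold resampling
    have := hσ l
    positivity
  · simp [resampling, ← Finset.sum_div, Finset.sum_add_distrib, hk, hsum]

theorem stationaryOn_resampling (hsum : ∑ i ∈ N, σ i = 1) : StationaryOn N (resampling σ) σ := by
  intro j hj
  simp [resampling, mul_add, mul_div_assoc', ← Finset.sum_div, Finset.sum_add_distrib, hj,
    ← Finset.sum_mul, hsum]

end Resampling

section CycleModel

variable (p : Finset X → X → ℝ) (M : Finset X) (c : List X)

noncomputable def cycleWeight (k l : X) : ℝ :=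
  if (k, l) ∈ cyclePairs c ∨ (l, k) ∈ cyclePairs c then |delta p M k l|⁻¹ else 0

noncomputable def cycleRate (k l : X) : ℝ := p {k, l} l * cycleWeight p M c k l

noncomputable def cycleModel (ε : ℝ) (N : Finset X) : X → X → ℝ :=
  if N = M then uniformization M ε (cycleRate p M c) else resampling (p N)

variable {p M c}

theorem cycleWeight_comm (k l : X) : cycleWeight p M c l k = cycleWeight p M c k l := by
  simp only [cycleWeight, delta_swap p M k l, abs_neg, or_comm]

theorem cycleRate_nonneg (hp : IsSCF p) (k l : X) : 0 ≤ cycleRate p M c k l := by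
  refine mul_nonneg ((hp _ (Finset.insert_nonempty _ _)).1 l) ?_
  unfold cycleWeight
  split_ifs <;> positivity

theorem mul_cycleRate_comm (k l : X) :
    p {k, l} l * cycleRate p M c l k = p {k, l} k * cycleRate p M c k l := by
  rw [cycleRate, cycleRate, Finset.pair_comm l k, cycleWeight_comm]
  ring

theorem cycleRate_netFlow (hpos : PosConsistent p M c) (k l : X) :
    p M k * cycleRate p M c k l - p M l * cycleRate p M c l k
      = (if (k, l) ∈ cyclePairs c then 1 else 0) - (if (l, k) ∈ cyclePairs c then 1 else 0) := by
  have hflow : p M k * cycleRate p M c k l - p M l * cycleRate p M c l k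
      = cycleWeight p M c k l * delta p M k l := by
    rw [cycleRate, cycleRate, Finset.pair_comm l k, cycleWeight_comm, delta]
    ring
  rw [hflow, cycleWeight]
  by_cases hkl : (k, l) ∈ cyclePairs c
  · have hd := hpos _ hkl
    simp [hkl, hpos.swap_notMem hkl, abs_of_pos hd, hd.ne']
  by_cases hlk : (l, k) ∈ cyclePairs c
  · have hd := hpos _ hlk
    rw [delta_swap] at hd
    simp [hkl, hlk, abs_of_neg (neg_pos.1 hd), (neg_pos.1 hd).ne]
  · simp [hkl, hlk]

theorem cycleRate_balance (hc : IsCycleIn M c) (hpos : PosConsistent p M c) (j : X) :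
    ∑ i ∈ M, p M i * cycleRate p M c i j = p M j * ∑ l ∈ M, cycleRate p M c j l := by
  have h := Finset.sum_congr rfl fun i (_ : i ∈ M) => cycleRate_netFlow hpos i j
  rw [Finset.sum_sub_distrib, Finset.sum_sub_distrib,
    sum_indicator_mem_cyclePairs_left hc.1 hc.2.2, sum_indicator_mem_cyclePairs_right hc.1 hc.2.2,
    sub_self, ← Finset.mul_sum] at h
  linarith

variable {ε : ℝ}

theorem cycleModel_self : cycleModel p M c ε M = uniformization M ε (cycleRate p M c) :=
  if_pos rfl

theorem cycleModel_of_card_two (hM : 3 ≤ M.card) {N : Finset X} (hN : N.card = 2) :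
    cycleModel p M c ε N = resampling (p N) :=
  if_neg fun h => by
    rw [h] at hN
    omega

theorem isMSC_cycleModel (hp : IsSCF p) (hM : 3 ≤ M.card) (hε : 0 ≤ ε)
    (hεr : ∀ k ∈ M, ε * ∑ l ∈ M, cycleRate p M c k l < 1) : IsMSC M (cycleModel p M c ε) := by
  refine ⟨fun N hN => ?_, fun N hN => ?_, fun i _ j _ hij hzero => ?_,
    fun N hN i hi j hj hij => ?_⟩
  · rcases hN with rfl | ⟨-, hN⟩
    · rw [cycleModel_self]
      exact rowStochOn_uniformization hε (cycleRate_nonneg hp) hεr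
    · have hpN := hp N (Finset.card_pos.1 (by omega))
      rw [cycleModel_of_card_two hM hN]
      exact rowStochOn_resampling hpN.1 hpN.2.2
  · rcases hN with rfl | ⟨-, hN⟩
    · rw [cycleModel_self]
      exact fun k hk => uniformization_self_pos hε (cycleRate_nonneg hp k k) (hεr k hk)
    · rw [cycleModel_of_card_two hM hN]
      exact fun k _ => resampling_self_pos (hp N (Finset.card_pos.1 (by omega))).1 k
  · have hsum := (hp {i, j} (Finset.insert_nonempty _ _)).2.2
    rw [Finset.sum_pair hij] at hsum
    rw [cycleModel_of_card_two hM (Finset.card_pair hij), resampling_of_ne hij] at hzero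
    rw [cycleModel_of_card_two hM (Finset.card_pair hij), resampling_of_ne hij.symm]
    linarith
  · rw [cycleModel_of_card_two hM (Finset.card_pair hij), resampling_of_ne hij,
      resampling_of_ne hij.symm]
    rcases hN with rfl | ⟨-, hN⟩
    · rw [cycleModel_self, uniformization_of_ne hij, uniformization_of_ne hij.symm]
      linear_combination (ε / 2) * mul_cycleRate_comm (p := p) (M := N) (c := c) i j
    · obtain rfl : N = {i, j} :=
        (Finset.eq_of_subset_of_card_le
          (Finset.insert_subset hi (Finset.singleton_subset_iff.2 hj))
          (by rw [hN, Finset.card_pair hij])).symm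
      rw [cycleModel_of_card_two hM hN, resampling_of_ne hij, resampling_of_ne hij.symm]
      ring

theorem rationalizes_cycleModel (hp : IsSCF p) (hc : IsCycleIn M c) (hpos : PosConsistent p M c)
    (hε : 0 ≤ ε) (hεr : ∀ k ∈ M, ε * ∑ l ∈ M, cycleRate p M c k l < 1) :
    Rationalizes M (cycleModel p M c ε) p := by
  have hM : 3 ≤ M.card := by
    calc 3 ≤ c.length := hpos.three_le_length hc.2.1
      _ = c.toFinset.card := (List.toFinset_card_of_nodup hc.1).symm
      _ ≤ M.card := Finset.card_le_card fun x hx => hc.2.2 x (List.mem_toFinset.1 hx)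
  refine ⟨isMSC_cycleModel hp hM hε hεr, fun N hN => ?_⟩
  rcases hN with rfl | ⟨-, hN⟩
  · rw [cycleModel_self]
    exact stationaryOn_uniformization _ fun j _ => cycleRate_balance hc hpos j
  · rw [cycleModel_of_card_two hM hN]
    exact stationaryOn_resampling (hp N (Finset.card_pos.1 (by omega))).2.2

theorem cycleModel_not_reversible (hc : IsCycleIn M c) (hpos : PosConsistent p M c)
    (hε : ε ≠ 0) :
    ∃ k ∈ M, ∃ l ∈ M, p M k * cycleModel p M c ε M k l ≠ p M l * cycleModel p M c ε M l k := by
  obtain ⟨k, l, hkl⟩ :=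
    exists_mem_cyclePairs hc.1 (List.ne_nil_of_length_pos (by linarith [hc.2.1]))
  have hflow := cycleRate_netFlow hpos k l
  rw [if_pos hkl, if_neg (hpos.swap_notMem hkl)] at hflow
  obtain ⟨hk, hl⟩ := mem_of_mem_cyclePairs hkl
  refine ⟨k, hc.2.2 k hk, l, hc.2.2 l hl, fun h => ?_⟩
  rw [cycleModel_self, uniformization_of_ne (hpos.ne hkl),
    uniformization_of_ne (hpos.ne hkl).symm] at h
  exact hε (by linear_combination h - ε * hflow)

end CycleModel

theorem stmt3_general (M : Finset X)
    (p : Finset X → X → ℝ) (hp : IsSCF p)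
    (hcyc : ∃ c : List X, IsCycleIn M c ∧ PosConsistent p M c) :
    ∃ q : Finset X → X → X → ℝ, Rationalizes M q p ∧
      ∃ k ∈ M, ∃ l ∈ M, p M k * q M k l ≠ p M l * q M l k := by
  obtain ⟨c, hc, hpos⟩ := hcyc
  obtain ⟨ε, hε, hεr⟩ := exists_pos_mul_sum_lt_one M (cycleRate p M c) (cycleRate_nonneg hp)
  exact ⟨cycleModel p M c ε, rationalizes_cycleModel hp hc hpos hε.le hεr,
    cycleModel_not_reversible hc hpos hε.ne'⟩

/-- If `p(·|M)` admits a positive sign-consistent cycle on some subset of `M`, then there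
exists an MSC model rationalizing `p` on `M` that is not reversible on `M` w.r.t. `p`. -/
theorem stmt3 (M : Finset X) (hM : M.Nonempty)
    (p : Finset X → X → ℝ) (hp : IsSCF p)
    (hcyc : ∃ c : List X, IsCycleIn M c ∧ PosConsistent p M c) :
    ∃ q : Finset X → X → X → ℝ, Rationalizes M q p ∧
      ∃ k ∈ M, ∃ l ∈ M, p M k * q M k l ≠ p M l * q M l k :=
  stmt3_general M p hp hcyc
end

section
/- If a stochastic choice function p is rationalizable on a menu M by an MSC model that is pairwise comparable on M, then p(·|M) is bounded in a cycle over every ordered pair of distinct alternatives of M. -/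
open Finset

variable {X : Type*} [DecidableEq X]

/-!
The net flow `g u v = p(u|M) q_uv(M) - p(v|M) q_vu(M)` of the chain `Q(M)` in its stationary
distribution is antisymmetric and, by stationarity, divergence-free: a circulation on `M`.
Detailed balance of the two-state chain on `{i, j}` together with TR-IIA gives the factorization
`g i j = (q_ij(M) + q_ji(M)) δ_ij(M)`, and pairwise comparability makes the factor positive,
so `δ_ij(M)` and `g i j` have the same sign. A circulation with positive value on an edge
carries a simple cycle through that edge along which it is positive: otherwise the set of
vertices reachable from the head of the edge along positive edges would receive positive net
inflow.
-/

lemma List.exists_nodup_isChain_cons_of_relationReflTransGen {α : Type*} {r : α → α → Prop}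
    {a b : α} (h : Relation.ReflTransGen r a b) :
    ∃ l, IsChain r (a :: l) ∧ (a :: l).Nodup ∧ getLast (a :: l) (cons_ne_nil _ _) = b := by
  refine Relation.ReflTransGen.head_induction_on h ⟨[], .singleton _, nodup_singleton _, rfl⟩ ?_
  rintro c d hcd - ⟨l, hchain, hnodup, hlast⟩
  by_cases hc : c ∈ d :: l
  · obtain ⟨s, t, hst⟩ := append_of_mem hc
    have hsuffix : c :: t <:+ d :: l := hst ▸ suffix_append s (c :: t)
    refine ⟨t, hchain.suffix hsuffix, hnodup.sublist hsuffix.sublist, ?_⟩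
    simp only [hst, getLast_append_of_ne_nil _ (cons_ne_nil c t)] at hlast
    exact hlast
  · exact ⟨d :: l, hchain.cons_cons hcd, nodup_cons.2 ⟨hc, hnodup⟩, by rwa [getLast_cons_cons]⟩

lemma List.IsChain.rel_of_mem_zip_tail {α : Type*} {R : α → α → Prop} :
    ∀ {l : List α}, IsChain R l → ∀ {x y : α}, (x, y) ∈ l.zip l.tail → R x y
  | [], _, _, _, h | [_], _, _, _, h => by simp at h
  | a :: b :: t, hchain, x, y, h => by
    rw [isChain_cons_cons] at hchain
    simp only [tail_cons, zip_cons_cons, mem_cons, Prod.mk.injEq] at h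
    rcases h with ⟨rfl, rfl⟩ | h
    · exact hchain.1
    · exact hchain.2.rel_of_mem_zip_tail h

lemma cyclePairs_cons {α : Type*} (x : α) (l : List α) :
    cyclePairs (x :: l) = (x :: l).zip (l ++ [x]) := by
  simp [cyclePairs]

lemma rel_of_mem_cyclePairs_of_isChain {α : Type*} {R : α → α → Prop} {x : α} {l : List α}
    (h : (x :: l ++ [x]).IsChain R) {pr : α × α} (hpr : pr ∈ cyclePairs (x :: l)) :
    R pr.1 pr.2 := by
  refine h.rel_of_mem_zip_tail ?_
  have hlen : (x :: l).length = (l ++ [x]).length := by simp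
  rwa [List.cons_append, List.tail_cons, ← List.cons_append, ← List.append_nil (l ++ [x]),
    List.zip_append hlen, List.zip_nil_right, List.append_nil, ← cyclePairs_cons]

lemma IsCycleIn.mem_of_mem_cyclePairs {α : Type*} {M : Finset α} {c : List α}
    (hc : IsCycleIn M c) {pr : α × α} (hpr : pr ∈ cyclePairs c) : pr.1 ∈ M ∧ pr.2 ∈ M := by
  obtain ⟨h₁, h₂⟩ := List.of_mem_zip hpr
  exact ⟨hc.2.2 _ h₁, hc.2.2 _ (List.mem_rotate.1 h₂)⟩

def IsCirculation {α : Type*} (M : Finset α) (g : α → α → ℝ) : Prop :=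
  (∀ i ∈ M, ∀ j ∈ M, g i j = -g j i) ∧ ∀ j ∈ M, ∑ i ∈ M, g i j = 0

namespace IsCirculation

variable {α : Type*} {M : Finset α} {g : α → α → ℝ}

lemma neg (hg : IsCirculation M g) : IsCirculation M (-g) :=
  ⟨fun i hi j hj => by simp [hg.1 i hi j hj],
    fun j hj => by simp [Finset.sum_neg_distrib, hg.2 j hj]⟩

lemma sum_sum_eq_zero (hg : IsCirculation M g) {S : Finset α} (hS : S ⊆ M) :
    ∑ j ∈ S, ∑ i ∈ S, g i j = 0 := by
  have h : ∑ j ∈ S, ∑ i ∈ S, g i j = -∑ j ∈ S, ∑ i ∈ S, g i j := by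
    conv_rhs => rw [Finset.sum_comm]
    simp only [← Finset.sum_neg_distrib]
    exact Finset.sum_congr rfl fun j hj => Finset.sum_congr rfl fun i hi =>
      hg.1 i (hS hi) j (hS hj)
  linarith

lemma reflTransGen_of_pos (hg : IsCirculation M g) {a b : α} (ha : a ∈ M) (hb : b ∈ M)
    (hab : 0 < g a b) : Relation.ReflTransGen (fun u v => v ∈ M ∧ 0 < g u v) b a := by
  classical
  set S := M.filter (Relation.ReflTransGen (fun u v => v ∈ M ∧ 0 < g u v) b)
  have hSM : S ⊆ M := Finset.filter_subset _ _
  by_contra haS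
  -- no positive edge leaves the reachable set `S`, so every edge entering it carries `g ≥ 0`
  have hinflow : ∀ j ∈ S, ∀ i ∈ M \ S, 0 ≤ g i j := by
    intro j hj i hi
    obtain ⟨hiM, hiS⟩ := Finset.mem_sdiff.1 hi
    have hji : ¬0 < g j i := fun hji =>
      hiS (Finset.mem_filter.2 ⟨hiM, (Finset.mem_filter.1 hj).2.tail ⟨hiM, hji⟩⟩)
    linarith [hg.1 i hiM j (hSM hj)]
  have hbS : b ∈ S := Finset.mem_filter.2 ⟨hb, .refl⟩
  have haS' : a ∈ M \ S := Finset.mem_sdiff.2 ⟨ha, fun h => haS (Finset.mem_filter.1 h).2⟩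
  have hpos : 0 < ∑ j ∈ S, ∑ i ∈ M \ S, g i j :=
    Finset.sum_pos' (fun j hj => Finset.sum_nonneg (hinflow j hj))
      ⟨b, hbS, Finset.sum_pos' (hinflow b hbS) ⟨a, haS', hab⟩⟩
  have hzero : ∑ j ∈ S, ∑ i ∈ M \ S, g i j = 0 := by
    simp only [Finset.sum_sdiff_eq_sub hSM, Finset.sum_sub_distrib, hg.sum_sum_eq_zero hSM,
      Finset.sum_eq_zero fun j hj => hg.2 j (hSM hj), sub_zero]
  linarith

lemma exists_cycle (hg : IsCirculation M g) {a b : α} (ha : a ∈ M) (hb : b ∈ M)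
    (hab : 0 < g a b) :
    ∃ c, IsCycleIn M c ∧ (a, b) ∈ cyclePairs c ∧ ∀ pr ∈ cyclePairs c, 0 < g pr.1 pr.2 := by
  have hne : a ≠ b := by
    rintro rfl
    linarith [hg.1 a ha a ha]
  obtain ⟨l, hchain, hnodup, hlast⟩ :=
    List.exists_nodup_isChain_cons_of_relationReflTransGen (hg.reflTransGen_of_pos ha hb hab)
  have hl : l ≠ [] := by
    rintro rfl
    exact hne hlast.symm
  obtain ⟨d, rfl⟩ : ∃ d, l = d ++ [a] :=
    ⟨l.dropLast, by rw [← hlast, List.getLast_cons hl, List.dropLast_append_getLast]⟩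
  have hmem : ∀ x ∈ d ++ [a], x ∈ M :=
    hchain.cons_induction (· ∈ M) _ (fun _ _ h _ => h.1) hb
  refine ⟨a :: b :: d, ⟨?_, by simp, ?_⟩, by simp [cyclePairs_cons], fun pr hpr => ?_⟩
  · rw [← List.cons_append] at hnodup
    simpa using List.nodup_append_comm.1 hnodup
  · simp only [List.mem_cons]
    rintro x (rfl | rfl | hx)
    exacts [ha, hb, hmem x (List.mem_append_left _ hx)]
  · refine rel_of_mem_cyclePairs_of_isChain (R := fun u v => 0 < g u v) ?_ hpr
    have hcycle : (a :: (b :: d ++ [a])).IsChain fun u v => v ∈ M ∧ 0 < g u v :=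
      hchain.cons_cons ⟨hb, hab⟩
    exact hcycle.imp fun _ _ h => h.2

end IsCirculation

section MSC

variable {M : Finset X} {p : Finset X → X → ℝ} {q : Finset X → X → X → ℝ}

def netFlow (M : Finset X) (p : Finset X → X → ℝ) (q : Finset X → X → X → ℝ) (u v : X) : ℝ :=
  p M u * q M u v - p M v * q M v u

lemma isCirculation_netFlow (hrat : Rationalizes M q p) : IsCirculation M (netFlow M p q) := by
  refine ⟨fun i _ j _ => by simp only [netFlow]; ring, fun j hj => ?_⟩
  have hstat : ∑ i ∈ M, p M i * q M i j = p M j := hrat.2 M (Or.inl rfl) j hj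
  have hrow : ∑ i ∈ M, q M j i = 1 := (hrat.1.1 M (Or.inl rfl)).2 j hj
  simp only [netFlow, Finset.sum_sub_distrib, hstat, ← Finset.mul_sum, hrow, mul_one, sub_self]

lemma relMenu_pair {i j : X} (hi : i ∈ M) (hj : j ∈ M) (hij : i ≠ j) : RelMenu M {i, j} :=
  Or.inr ⟨Finset.insert_subset hi (Finset.singleton_subset_iff.2 hj), Finset.card_pair hij⟩

lemma add_pos_of_eq_zero_imp_pos {α : Type*} [AddCommMonoid α] [PartialOrder α]
    [IsOrderedCancelAddMonoid α] {a b : α} (ha : 0 ≤ a) (hb : 0 ≤ b) (h : a = 0 → 0 < b) :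
    0 < a + b := by
  rcases ha.eq_or_lt with rfl | ha
  · simpa using h rfl
  · exact add_pos_of_pos_of_nonneg ha hb

lemma netFlow_eq_mul_delta (hp : IsSCF p) (hrat : Rationalizes M q p) {i j : X} (hi : i ∈ M)
    (hj : j ∈ M) : netFlow M p q i j = (q M i j + q M j i) * delta p M i j := by
  rcases eq_or_ne i j with rfl | hij
  · simp only [netFlow, delta]
    ring
  obtain ⟨⟨hstoch, -, hA2, hTR⟩, hstat⟩ := hrat
  have hpair := relMenu_pair hi hj hij
  have hiN : i ∈ ({i, j} : Finset X) := Finset.mem_insert_self i {j}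
  have hjN : j ∈ ({i, j} : Finset X) := Finset.mem_insert_of_mem (Finset.mem_singleton_self j)
  have hnonneg := (hstoch _ hpair).1
  have hcomparable : 0 < q {i, j} i j + q {i, j} j i :=
    add_pos_of_eq_zero_imp_pos (hnonneg i hiN j hjN) (hnonneg j hjN i hiN) (hA2 i hi j hj hij)
  have hrow : q {i, j} j i + q {i, j} j j = 1 := by
    simpa [Finset.sum_pair hij] using (hstoch _ hpair).2 j hjN
  have hstat_j : p {i, j} i * q {i, j} i j + p {i, j} j * q {i, j} j j = p {i, j} j := by
    simpa [Finset.sum_pair hij] using hstat _ hpair j hjN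
  have hsum : p {i, j} i + p {i, j} j = 1 := by
    simpa [Finset.sum_pair hij] using (hp {i, j} ⟨i, hiN⟩).2.2
  -- detailed balance of the two-state chain on `{i, j}`
  have hbalance : p {i, j} i * q {i, j} i j = p {i, j} j * q {i, j} j i := by
    linear_combination hstat_j - p {i, j} j * hrow
  have hdelta : (q {i, j} i j + q {i, j} j i) * delta p M i j
      = q {i, j} i j * p M i - q {i, j} j i * p M j := by
    simp only [delta]
    linear_combination -(p M i + p M j) * hbalance
      + (q {i, j} i j * p M i - q {i, j} j i * p M j) * hsum
  have hflow : (q {i, j} i j + q {i, j} j i) * netFlow M p q i j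
      = (q M i j + q M j i) * (q {i, j} i j * p M i - q {i, j} j i * p M j) := by
    simp only [netFlow]
    linear_combination -(p M i + p M j) * hTR M (Or.inl rfl) i hi j hj hij
  refine mul_left_cancel₀ hcomparable.ne' ?_
  rw [hflow, ← hdelta]
  ring

lemma q_add_q_swap_nonneg (hrat : Rationalizes M q p) {u v : X} (hu : u ∈ M) (hv : v ∈ M) :
    0 ≤ q M u v + q M v u :=
  add_nonneg ((hrat.1.1 M (Or.inl rfl)).1 u hu v hv) ((hrat.1.1 M (Or.inl rfl)).1 v hv u hu)

lemma delta_pos_of_netFlow_pos (hp : IsSCF p) (hrat : Rationalizes M q p) {u v : X}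
    (hu : u ∈ M) (hv : v ∈ M) (h : 0 < netFlow M p q u v) : 0 < delta p M u v := by
  rw [netFlow_eq_mul_delta hp hrat hu hv] at h
  exact pos_of_mul_pos_right h (q_add_q_swap_nonneg hrat hu hv)

lemma delta_neg_of_netFlow_neg (hp : IsSCF p) (hrat : Rationalizes M q p) {u v : X}
    (hu : u ∈ M) (hv : v ∈ M) (h : netFlow M p q u v < 0) : delta p M u v < 0 := by
  rw [netFlow_eq_mul_delta hp hrat hu hv] at h
  exact neg_of_mul_neg_right h (q_add_q_swap_nonneg hrat hu hv)

end MSC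

theorem stmt6_general (M : Finset X)
    (p : Finset X → X → ℝ) (hp : IsSCF p)
    (q : Finset X → X → X → ℝ) (hrat : Rationalizes M q p)
    (hpc : ∀ i ∈ M, ∀ j ∈ M, i ≠ j → q M i j = 0 → 0 < q M j i) :
    ∀ i ∈ M, ∀ j ∈ M, i ≠ j → BoundedInCycle p M i j := by
  intro i hi j hj hij
  have hnonneg := (hrat.1.1 M (Or.inl rfl)).1
  have hweight : 0 < q M i j + q M j i :=
    add_pos_of_eq_zero_imp_pos (hnonneg i hi j hj) (hnonneg j hj i hi) (hpc i hi j hj hij)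
  have hfactor := netFlow_eq_mul_delta hp hrat hi hj
  have hg := isCirculation_netFlow hrat
  rcases lt_trichotomy (delta p M i j) 0 with hneg | hzero | hpos
  · obtain ⟨c, hc, hijc, hflow⟩ := hg.neg.exists_cycle hi hj
      (by simpa [hfactor] using mul_neg_of_pos_of_neg hweight hneg)
    refine Or.inr ⟨c, hc, hijc, Or.inr fun pr hpr => ?_⟩
    obtain ⟨hu, hv⟩ := hc.mem_of_mem_cyclePairs hpr
    exact delta_neg_of_netFlow_neg hp hrat hu hv (neg_pos.1 (hflow pr hpr))
  · exact Or.inl hzero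
  · obtain ⟨c, hc, hijc, hflow⟩ := hg.exists_cycle hi hj (hfactor ▸ mul_pos hweight hpos)
    refine Or.inr ⟨c, hc, hijc, Or.inl fun pr hpr => ?_⟩
    obtain ⟨hu, hv⟩ := hc.mem_of_mem_cyclePairs hpr
    exact delta_pos_of_netFlow_pos hp hrat hu hv (hflow pr hpr)

/-- If `p` is rationalizable on `M` by an MSC model that is pairwise comparable on `M`,
then `p(·|M)` is bounded in a cycle over every ordered pair of distinct alternatives of `M`. -/
theorem stmt6 (M : Finset X) (hM : M.Nonempty)
    (p : Finset X → X → ℝ) (hp : IsSCF p)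
    (q : Finset X → X → X → ℝ) (hrat : Rationalizes M q p)
    (hpc : ∀ i ∈ M, ∀ j ∈ M, i ≠ j → q M i j = 0 → 0 < q M j i) :
    ∀ i ∈ M, ∀ j ∈ M, i ≠ j → BoundedInCycle p M i j :=
  stmt6_general M p hp q hrat hpc
end
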